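/- Positive semidefiniteness of the elementary variogram kernel: let H ∈ (0,1), and v(x) = ∫_{−π/2}^{π/2} c(θ) |x·u(θ)|^{2H} dθ with c : [−π/2, π/2] → ℝ≥0 integrable. Then the kernel K(x,y) = v(x) + v(y) − v(x − y) is positive semidefinite on ℝ²: for all n, points x₁,…,xₙ ∈ ℝ² and reals a₁,…,aₙ, Σ_{j,k} a_j a_k K(x_j, x_k) ≥ 0. -/

import Mathlib

/-!
For `0 < r < 2` one has `|t| ^ r = C⁻¹ ∫₀^∞ (1 - cos (t ξ)) ξ^(-1-r) dξ` with `C > 0`, and for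
each `ξ` the kernel `(1 - cos sξ) + (1 - cos tξ) - (1 - cos (s - t)ξ)` is positive semidefinite,
since `cos (s - t)ξ = cos sξ cos tξ + sin sξ sin tξ` turns its quadratic form into a sum of two
squares. Averaging positive semidefinite kernels against nonnegative weights keeps them positive
semidefinite, so `|s| ^ r + |t| ^ r - |s - t| ^ r` is positive semidefinite. Composing with
`x ↦ ⟪x, u θ⟫` and averaging once more against `c θ dθ` gives the variogram kernel.
-/

open Real MeasureTheory ProbabilityTheory
open scoped RealInnerProductSpace

noncomputable def u (θ : ℝ) : EuclideanSpace ℝ (Fin 2) := WithLp.toLp 2 ![Real.cos θ, Real.sin θ]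

noncomputable def gam (H : ℝ) : ℝ := Real.pi / (H * Real.Gamma (2 * H) * Real.sin (H * Real.pi))

open Set

def IsPosSemidefKernel {α : Type*} (K : α → α → ℝ) : Prop :=
  ∀ (n : ℕ) (x : Fin n → α) (a : Fin n → ℝ), 0 ≤ ∑ j, ∑ k, a j * a k * K (x j) (x k)

namespace IsPosSemidefKernel

variable {α : Type*} {K : α → α → ℝ}

lemma comp {β : Type*} (hK : IsPosSemidefKernel K) (f : β → α) :
    IsPosSemidefKernel fun x y => K (f x) (f y) :=
  fun n x a => hK n (f ∘ x) a

lemma const_mul (hK : IsPosSemidefKernel K) {c : ℝ} (hc : 0 ≤ c) :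
    IsPosSemidefKernel fun x y => c * K x y := by
  intro n x a
  have hform : ∑ j, ∑ k, a j * a k * (c * K (x j) (x k))
      = c * ∑ j, ∑ k, a j * a k * K (x j) (x k) := by
    simp only [Finset.mul_sum]
    exact Finset.sum_congr rfl fun j _ => Finset.sum_congr rfl fun k _ => by ring
  rw [hform]
  exact mul_nonneg hc (hK n x a)

lemma integral {ι : Type*} [MeasurableSpace ι] {μ : Measure ι} {K : ι → α → α → ℝ}
    (hK : ∀ᵐ i ∂μ, IsPosSemidefKernel (K i)) (hint : ∀ x y, Integrable (fun i => K i x y) μ) :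
    IsPosSemidefKernel fun x y => ∫ i, K i x y ∂μ := by
  intro n x a
  have hint' : ∀ j k, Integrable (fun i => a j * a k * K i (x j) (x k)) μ :=
    fun j k => (hint _ _).const_mul _
  calc (0 : ℝ) ≤ ∫ i, ∑ j, ∑ k, a j * a k * K i (x j) (x k) ∂μ :=
        integral_nonneg_of_ae (hK.mono fun i hi => hi n x a)
    _ = ∑ j, ∑ k, a j * a k * ∫ i, K i (x j) (x k) ∂μ := by
        rw [integral_finsetSum _ fun j _ => integrable_finsetSum _ fun k _ => hint' j k]
        refine Finset.sum_congr rfl fun j _ => ?_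
        rw [integral_finsetSum _ fun k _ => hint' j k]
        exact Finset.sum_congr rfl fun k _ => integral_const_mul _ _

end IsPosSemidefKernel

lemma isPosSemidefKernel_one_sub_cos :
    IsPosSemidefKernel fun s t : ℝ => (1 - cos s) + (1 - cos t) - (1 - cos (s - t)) := by
  intro n s a
  have hform : ∑ j, ∑ k, a j * a k * ((1 - cos (s j)) + (1 - cos (s k)) - (1 - cos (s j - s k)))
      = (∑ j, a j * (1 - cos (s j))) ^ 2 + (∑ j, a j * sin (s j)) ^ 2 := by
    simp only [sq, Finset.sum_mul_sum, ← Finset.sum_add_distrib, cos_sub]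
    exact Finset.sum_congr rfl fun j _ => Finset.sum_congr rfl fun k _ => by ring
  rw [hform]
  positivity

section FractionalKernel

variable {r : ℝ}

lemma integrableOn_Ioc_one_sub_cos_mul_rpow (hr : r < 2) (t : ℝ) :
    IntegrableOn (fun x => (1 - cos (t * x)) * x ^ (-1 - r)) (Ioc 0 1) := by
  have hbound : IntegrableOn (fun x : ℝ => t ^ 2 / 2 * x ^ (1 - r)) (Ioc 0 1) := by
    refine Integrable.const_mul ?_ _
    exact (intervalIntegral.intervalIntegrable_rpow' (by linarith)).1
  refine hbound.mono' (by fun_prop) ?_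
  filter_upwards [ae_restrict_mem measurableSet_Ioc] with x hx
  have hx0 : 0 < x := hx.1
  have hcos : 1 - cos (t * x) ≤ (t * x) ^ 2 / 2 := by
    linarith [one_sub_sq_div_two_le_cos (x := t * x)]
  have hpow : x ^ (2 : ℕ) * x ^ (-1 - r) = x ^ (1 - r) := by
    rw [← rpow_natCast, ← rpow_add hx0]
    ring_nf
  rw [norm_of_nonneg (mul_nonneg (by linarith [cos_le_one (t * x)]) (rpow_nonneg hx0.le _))]
  calc (1 - cos (t * x)) * x ^ (-1 - r) ≤ (t * x) ^ 2 / 2 * x ^ (-1 - r) := by gcongr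
    _ = t ^ 2 / 2 * x ^ (1 - r) := by rw [← hpow]; ring

lemma integrableOn_Ioi_one_sub_cos_mul_rpow (hr : 0 < r) (t : ℝ) :
    IntegrableOn (fun x => (1 - cos (t * x)) * x ^ (-1 - r)) (Ioi 1) := by
  have hbound : IntegrableOn (fun x : ℝ => 2 * x ^ (-1 - r)) (Ioi 1) :=
    (integrableOn_Ioi_rpow_of_lt (by linarith) one_pos).const_mul 2
  refine hbound.mono' (by fun_prop) ?_
  filter_upwards [ae_restrict_mem measurableSet_Ioi] with x hx
  have hx0 : 0 < x := one_pos.trans hx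
  rw [norm_of_nonneg (mul_nonneg (by linarith [cos_le_one (t * x)]) (rpow_nonneg hx0.le _))]
  gcongr
  linarith [neg_one_le_cos (t * x)]

lemma integrableOn_one_sub_cos_mul_rpow (hr0 : 0 < r) (hr2 : r < 2) (t : ℝ) :
    IntegrableOn (fun x => (1 - cos (t * x)) * x ^ (-1 - r)) (Ioi 0) := by
  rw [← Ioc_union_Ioi_eq_Ioi zero_le_one]
  exact (integrableOn_Ioc_one_sub_cos_mul_rpow hr2 t).union
    (integrableOn_Ioi_one_sub_cos_mul_rpow hr0 t)

noncomputable def fbmConst (r : ℝ) : ℝ := ∫ x in Ioi 0, (1 - cos x) * x ^ (-1 - r)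

lemma fbmConst_pos (hr0 : 0 < r) (hr2 : r < 2) : 0 < fbmConst r := by
  have hint : IntegrableOn (fun x => (1 - cos x) * x ^ (-1 - r)) (Ioi 0) := by
    simpa using integrableOn_one_sub_cos_mul_rpow hr0 hr2 1
  have hnonneg : 0 ≤ᵐ[volume.restrict (Ioi 0)] fun x => (1 - cos x) * x ^ (-1 - r) := by
    filter_upwards [ae_restrict_mem measurableSet_Ioi] with x hx
    exact mul_nonneg (by linarith [cos_le_one x]) (rpow_nonneg (le_of_lt hx) _)
  rw [fbmConst, setIntegral_pos_iff_support_of_nonneg_ae hnonneg hint]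
  have hsub : Ioc (π / 2) π ⊆ Function.support (fun x => (1 - cos x) * x ^ (-1 - r)) ∩ Ioi 0 := by
    intro x ⟨hx1, hx2⟩
    have hx0 : 0 < x := lt_trans (by positivity) hx1
    have hcos := cos_nonpos_of_pi_div_two_le_of_le hx1.le (by linarith [pi_pos])
    exact ⟨mul_ne_zero (by linarith) (rpow_pos_of_pos hx0 _).ne', hx0⟩
  refine lt_of_lt_of_le ?_ (measure_mono hsub)
  simp [pi_pos]

lemma integral_one_sub_cos_mul_rpow (hr : 0 < r) (t : ℝ) :
    ∫ x in Ioi 0, (1 - cos (t * x)) * x ^ (-1 - r) = |t| ^ r * fbmConst r := by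
  rcases eq_or_ne t 0 with rfl | ht
  · simp [zero_rpow hr.ne']
  have htpos : 0 < |t| := abs_pos.2 ht
  have hcos : ∀ x, cos (t * x) = cos (|t| * x) := fun x => by
    rcases abs_choice t with h | h <;> simp [h, neg_mul]
  have hscale : ∀ x ∈ Ioi (0 : ℝ), (1 - cos (t * x)) * x ^ (-1 - r)
      = |t| ^ (1 + r) * ((1 - cos (|t| * x)) * (|t| * x) ^ (-1 - r)) := fun x hx => by
    rw [hcos, mul_rpow htpos.le (le_of_lt hx), mul_left_comm, ← mul_assoc (|t| ^ (1 + r)),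
      ← rpow_add htpos]
    norm_num
  rw [setIntegral_congr_fun measurableSet_Ioi hscale, integral_const_mul,
    integral_comp_mul_left_Ioi (fun y => (1 - cos y) * y ^ (-1 - r)) 0 htpos, mul_zero,
    smul_eq_mul, ← mul_assoc, ← rpow_neg_one, ← rpow_add htpos, fbmConst]
  norm_num

end FractionalKernel

lemma isPosSemidefKernel_abs_rpow {r : ℝ} (hr0 : 0 < r) (hr2 : r < 2) :
    IsPosSemidefKernel fun s t : ℝ => |s| ^ r + |t| ^ r - |s - t| ^ r := by
  set g : ℝ → ℝ → ℝ := fun t x => (1 - cos (t * x)) * x ^ (-1 - r)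
  have hg := integrableOn_one_sub_cos_mul_rpow hr0 hr2
  have hrep : (fun s t : ℝ => |s| ^ r + |t| ^ r - |s - t| ^ r)
      = fun s t => (fbmConst r)⁻¹ * ∫ x in Ioi 0, g s x + g t x - g (s - t) x := by
    ext s t
    rw [integral_sub (f := fun x => g s x + g t x) ((hg s).add (hg t)) (hg (s - t)),
      integral_add (hg s) (hg t)]
    simp only [integral_one_sub_cos_mul_rpow hr0]
    field_simp [(fbmConst_pos hr0 hr2).ne']
  rw [hrep]
  refine .const_mul (.integral (K := fun x s t => g s x + g t x - g (s - t) x) ?_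
    fun s t => ((hg s).add (hg t)).sub (hg (s - t))) (inv_nonneg.2 (fbmConst_pos hr0 hr2).le)
  filter_upwards [ae_restrict_mem measurableSet_Ioi] with x hx
  have hK := (isPosSemidefKernel_one_sub_cos.comp (· * x)).const_mul
    (rpow_nonneg (le_of_lt hx) (-1 - r))
  convert hK using 3 with s t
  simp only [g, sub_mul]
  ring

theorem isPosSemidefKernel_variogram {ι E : Type*} [MeasurableSpace ι] [NormedAddCommGroup E]
    [InnerProductSpace ℝ E] {μ : Measure ι} {p : ℝ} (hp0 : 0 < p) (hp2 : p < 2) {c : ι → ℝ}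
    (hc : ∀ᵐ θ ∂μ, 0 ≤ c θ) (w : ι → E) {v : E → ℝ}
    (hv : ∀ y, v y = ∫ θ, c θ * |⟪y, w θ⟫| ^ p ∂μ)
    (hint : ∀ y, Integrable (fun θ => c θ * |⟪y, w θ⟫| ^ p) μ) :
    IsPosSemidefKernel fun y z => v y + v z - v (y - z) := by
  set f : E → ι → ℝ := fun y θ => c θ * |⟪y, w θ⟫| ^ p
  have hrep : (fun y z => v y + v z - v (y - z))
      = fun y z => ∫ θ, f y θ + f z θ - f (y - z) θ ∂μ := by
    ext y z
    rw [integral_sub (f := fun θ => f y θ + f z θ) ((hint y).add (hint z)) (hint (y - z)),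
      integral_add (hint y) (hint z),
      hv, hv, hv]
  rw [hrep]
  refine .integral (K := fun θ y z => f y θ + f z θ - f (y - z) θ) ?_
    fun y z => ((hint y).add (hint z)).sub (hint (y - z))
  filter_upwards [hc] with θ hθ
  convert ((isPosSemidefKernel_abs_rpow hp0 hp2).comp fun y => ⟪y, w θ⟫).const_mul hθ using 3
  simp only [f, inner_sub_left]
  ring

lemma continuous_u : Continuous u := by
  unfold u
  fun_prop

theorem elementary_variogram_kernel_psd (H : ℝ) (hH : H ∈ Set.Ioo (0:ℝ) 1)
    (c : ℝ → ℝ) (hc0 : ∀ θ, 0 ≤ c θ)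
    (hci : IntervalIntegrable c volume (-(π/2)) (π/2))
    (v : EuclideanSpace ℝ (Fin 2) → ℝ)
    (hv : ∀ x, v x = ∫ θ in (-(π/2))..(π/2), c θ * |⟪x, u θ⟫| ^ (2*H)) :
    ∀ (n : ℕ) (x : Fin n → EuclideanSpace ℝ (Fin 2)) (a : Fin n → ℝ),
      0 ≤ ∑ j, ∑ k, a j * a k * (v (x j) + v (x k) - v (x j - x k)) := by
  obtain ⟨hH0, hH1⟩ := hH
  have hle : -(π / 2) ≤ π / 2 := by linarith [pi_pos]
  refine isPosSemidefKernel_variogram (p := 2 * H) (by linarith) (by linarith) (ae_of_all _ hc0) u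
    (fun y => by rw [hv, intervalIntegral.integral_of_le hle]) fun y => ?_
  have hcont : Continuous fun θ => |⟪y, u θ⟫| ^ (2 * H) :=
    (continuous_const.inner continuous_u).abs.rpow_const fun _ => .inr (by linarith)
  exact (intervalIntegrable_iff_integrableOn_Ioc_of_le hle).1
    (hci.mul_continuousOn hcont.continuousOn)
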